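/- arXiv:2306.10132 — 4 statements merged into one kernel-verified Lean document; each statement's English description precedes it below -/
import Mathlib

section
/- Let K_m⁻ and K_n⁻ be all-negative complete graphs with m ≥ n, and let ζ₁ be a positive k-switching function for K_m⁻ with vertices u₁,…,u_m. Then ζ((u_i, v_j)) = ζ₁(u_{((i+j−2) mod m)+1}) defines a positive k-switching function for the Cartesian product K_m⁻ □ K_n⁻. -/
open Finset
open scoped Classical

/-- A signed graph: a simple graph together with a ±1 sign on each edge. -/
structure SGraph (V : Type*) where
  G : SimpleGraph V
  sign : V → V → ℤ
  sign_symm : ∀ u v, sign u v = sign v u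
  sign_mem : ∀ u v, G.Adj u v → sign u v = 1 ∨ sign u v = -1

variable {V V1 V2 W : Type*}

/-- `ζ` is a positive k-switching function for the signed graph `S`. -/
def IsPosSwitching [Fintype V] (S : SGraph V) (k : ℕ) (ζ : V → Fin k → ℤ) : Prop :=
  (∀ v i, ζ v i = -1 ∨ ζ v i = 0 ∨ ζ v i = 1) ∧
  (∀ u v, S.G.Adj u v → (∑ i, ζ u i * ζ v i) ≠ 0) ∧
  (∀ u v, S.G.Adj u v → S.sign u v * Int.sign (∑ i, ζ u i * ζ v i) = 1)

def HasPosSwitching [Fintype V] (S : SGraph V) (k : ℕ) : Prop :=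
  ∃ ζ : V → Fin k → ℤ, IsPosSwitching S k ζ

/-- The balancing dimension: least `k ≥ 1` admitting a positive k-switching function. -/
noncomputable def bdim [Fintype V] (S : SGraph V) : ℕ :=
  sInf {k | 1 ≤ k ∧ HasPosSwitching S k}

/-- A signed graph is balanced iff it can be switched to all-positive by a 1-switching. -/
def SGraph.Balanced [Fintype V] (S : SGraph V) : Prop := HasPosSwitching S 1

/-- The negation of a signed graph. -/
def SGraph.neg (S : SGraph V) : SGraph V where
  G := S.G
  sign := fun u v => - S.sign u v
  sign_symm := fun u v => by (try dsimp only); rw [S.sign_symm]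
  sign_mem := fun u v h => by rcases S.sign_mem u v h with h1 | h1 <;> simp [h1]

def SGraph.Antibalanced [Fintype V] (S : SGraph V) : Prop := S.neg.Balanced

/-- Switching equivalence of signed graphs. -/
def SwitchEquiv (S1 S2 : SGraph V) : Prop :=
  S1.G = S2.G ∧ ∃ η : V → ℤ, (∀ v, η v = 1 ∨ η v = -1) ∧
    ∀ u v, S1.G.Adj u v → S2.sign u v = η u * S1.sign u v * η v

/-- The Cartesian product of signed graphs. -/
noncomputable def cartProd (S1 : SGraph V1) (S2 : SGraph V2) : SGraph (V1 × V2) where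
  G := S1.G □ S2.G
  sign := fun p q => if p.2 = q.2 then S1.sign p.1 q.1 else S2.sign p.2 q.2
  sign_symm := by
    intro u v
    try dsimp only
    rcases eq_or_ne u.2 v.2 with h | h
    · rw [if_pos h, if_pos h.symm, S1.sign_symm]
    · rw [if_neg h, if_neg (Ne.symm h), S2.sign_symm]
  sign_mem := by
    intro u v h
    try dsimp only
    rcases (SimpleGraph.boxProd_adj.mp h) with ⟨h1, h2⟩ | ⟨h1, h2⟩
    · rw [if_pos h2]; exact S1.sign_mem _ _ h1
    · rw [if_neg h1.ne]; exact S2.sign_mem _ _ h1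
/-- The HG-lexicographic product of signed graphs. -/
noncomputable def lexHG (S1 : SGraph V1) (S2 : SGraph V2) : SGraph (V1 × V2) where
  G := { Adj := fun p q => S1.G.Adj p.1 q.1 ∨ (p.1 = q.1 ∧ S2.G.Adj p.2 q.2)
         symm := by
           constructor
           rintro p q (h | ⟨h1, h2⟩)
           · exact Or.inl h.symm
           · exact Or.inr ⟨h1.symm, h2.symm⟩
         loopless := by
           constructor
           rintro p (h | ⟨_, h⟩)
           · exact S1.G.irrefl h
           · exact S2.G.irrefl h }
  sign := fun p q => if p.1 = q.1 then S2.sign p.2 q.2 else S1.sign p.1 q.1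
  sign_symm := by
    intro u v
    try dsimp only
    rcases eq_or_ne u.1 v.1 with h | h
    · rw [if_pos h, if_pos h.symm, S2.sign_symm]
    · rw [if_neg h, if_neg (Ne.symm h), S1.sign_symm]
  sign_mem := by
    rintro p q (h | ⟨h1, h2⟩)
    · (try dsimp only); rw [if_neg h.ne]; exact S1.sign_mem _ _ h
    · (try dsimp only); rw [if_pos h1]; exact S2.sign_mem _ _ h2

/-- The BCD-lexicographic product of signed graphs. -/
noncomputable def lexBCD (S1 : SGraph V1) (S2 : SGraph V2) : SGraph (V1 × V2) where
  G := { Adj := fun p q => S1.G.Adj p.1 q.1 ∨ (p.1 = q.1 ∧ S2.G.Adj p.2 q.2)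
         symm := by
           constructor
           rintro p q (h | ⟨h1, h2⟩)
           · exact Or.inl h.symm
           · exact Or.inr ⟨h1.symm, h2.symm⟩
         loopless := by
           constructor
           rintro p (h | ⟨_, h⟩)
           · exact S1.G.irrefl h
           · exact S2.G.irrefl h }
  sign := fun p q =>
    if S2.G.Adj p.2 q.2 then
      (if S1.G.Adj p.1 q.1 then S1.sign p.1 q.1 * S2.sign p.2 q.2 else S2.sign p.2 q.2)
    else S1.sign p.1 q.1
  sign_symm := by
    intro u v
    try dsimp only
    rw [S1.G.adj_comm v.1 u.1, S2.G.adj_comm v.2 u.2, S1.sign_symm v.1 u.1,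
      S2.sign_symm v.2 u.2]
  sign_mem := by
    rintro p q (h | ⟨h1, h2⟩) <;> try dsimp only
    · by_cases h2 : S2.G.Adj p.2 q.2
      · rw [if_pos h2, if_pos h]
        rcases S1.sign_mem _ _ h with e1 | e1 <;> rcases S2.sign_mem _ _ h2 with e2 | e2 <;>
          simp [e1, e2]
      · rw [if_neg h2]; exact S1.sign_mem _ _ h
    · rw [if_pos h2, if_neg (h1 ▸ S1.G.irrefl)]
      exact S2.sign_mem _ _ h2

/-- The tensor product of signed graphs. -/
def tensorProd (S1 : SGraph V1) (S2 : SGraph V2) : SGraph (V1 × V2) where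
  G := { Adj := fun p q => S1.G.Adj p.1 q.1 ∧ S2.G.Adj p.2 q.2
         symm := ⟨fun p q ⟨h1, h2⟩ => ⟨h1.symm, h2.symm⟩⟩
         loopless := ⟨fun p ⟨h1, _⟩ => S1.G.irrefl h1⟩ }
  sign := fun p q => S1.sign p.1 q.1 * S2.sign p.2 q.2
  sign_symm := by
    intro u v
    try dsimp only
    rw [S1.sign_symm, S2.sign_symm]
  sign_mem := by
    rintro p q ⟨h1, h2⟩
    try dsimp only
    rcases S1.sign_mem _ _ h1 with e1 | e1 <;> rcases S2.sign_mem _ _ h2 with e2 | e2 <;>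
      simp [e1, e2]

/-- The strong product of signed graphs. -/
noncomputable def strongProd (S1 : SGraph V1) (S2 : SGraph V2) : SGraph (V1 × V2) where
  G := { Adj := fun p q => (S1.G.Adj p.1 q.1 ∧ p.2 = q.2) ∨ (p.1 = q.1 ∧ S2.G.Adj p.2 q.2) ∨
           (S1.G.Adj p.1 q.1 ∧ S2.G.Adj p.2 q.2)
         symm := by
           constructor
           rintro p q (⟨h1, h2⟩ | ⟨h1, h2⟩ | ⟨h1, h2⟩)
           · exact Or.inl ⟨h1.symm, h2.symm⟩
           · exact Or.inr (Or.inl ⟨h1.symm, h2.symm⟩)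
           · exact Or.inr (Or.inr ⟨h1.symm, h2.symm⟩)
         loopless := by
           constructor
           rintro p (⟨h1, _⟩ | ⟨_, h2⟩ | ⟨h1, _⟩)
           · exact S1.G.irrefl h1
           · exact S2.G.irrefl h2
           · exact S1.G.irrefl h1 }
  sign := fun p q =>
    if p.1 = q.1 then S2.sign p.2 q.2
    else if p.2 = q.2 then S1.sign p.1 q.1
    else S1.sign p.1 q.1 * S2.sign p.2 q.2
  sign_symm := by
    intro u v
    try dsimp only
    rcases eq_or_ne u.1 v.1 with h | h
    · rw [if_pos h, if_pos h.symm, S2.sign_symm]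
    · rw [if_neg h, if_neg (Ne.symm h)]
      rcases eq_or_ne u.2 v.2 with h' | h'
      · rw [if_pos h', if_pos h'.symm, S1.sign_symm]
      · rw [if_neg h', if_neg (Ne.symm h'), S1.sign_symm, S2.sign_symm]
  sign_mem := by
    rintro p q (⟨h1, h2⟩ | ⟨h1, h2⟩ | ⟨h1, h2⟩) <;> try dsimp only
    · rw [if_neg h1.ne, if_pos h2]; exact S1.sign_mem _ _ h1
    · rw [if_pos h1]; exact S2.sign_mem _ _ h2
    · rw [if_neg h1.ne, if_neg h2.ne]
      rcases S1.sign_mem _ _ h1 with e1 | e1 <;> rcases S2.sign_mem _ _ h2 with e2 | e2 <;>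
        simp [e1, e2]
/-- The cycle on `ZMod n` (vertices `0,1,…,n-1`) with the single negative edge `{0,1}`. -/
noncomputable def Cneg (n : ℕ) : SGraph (ZMod n) where
  G := { Adj := fun i j => i ≠ j ∧ (i - j = 1 ∨ j - i = 1)
         symm := ⟨fun i j ⟨h1, h2⟩ => ⟨h1.symm, h2.symm⟩⟩
         loopless := ⟨fun i ⟨h1, _⟩ => h1 rfl⟩ }
  sign := fun i j => if (i = 0 ∧ j = 1) ∨ (i = 1 ∧ j = 0) then -1 else 1
  sign_symm := by
    intro u v
    try dsimp only
    exact if_congr (by tauto) rfl rfl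
  sign_mem := by
    intro u v _
    try dsimp only
    by_cases h : (u = 0 ∧ v = 1) ∨ (u = 1 ∧ v = 0)
    · rw [if_pos h]; exact Or.inr rfl
    · rw [if_neg h]; exact Or.inl rfl

/-- The all-negative complete signed graph on `n` vertices. -/
def Kneg (n : ℕ) : SGraph (Fin n) where
  G := ⊤
  sign := fun _ _ => -1
  sign_symm := fun _ _ => rfl
  sign_mem := fun _ _ _ => Or.inr rfl

/-- The edgeless signed graph on `k` vertices. -/
def Nk (k : ℕ) : SGraph (Fin k) where
  G := ⊥
  sign := fun _ _ => 1
  sign_symm := fun _ _ => rfl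
  sign_mem := fun _ _ h => (h.elim)

/-- The lexicographic product of simple graphs. -/
def lexProdGraph (G : SimpleGraph V1) (H : SimpleGraph V2) : SimpleGraph (V1 × V2) where
  Adj p q := G.Adj p.1 q.1 ∨ (p.1 = q.1 ∧ H.Adj p.2 q.2)
  symm := by
    constructor
    rintro p q (h | ⟨h1, h2⟩)
    · exact Or.inl h.symm
    · exact Or.inr ⟨h1.symm, h2.symm⟩
  loopless := by
    constructor
    rintro p (h | ⟨_, h⟩)
    · exact G.irrefl h
    · exact H.irrefl h

/-!
A positive switching function pulls back along any graph homomorphism that preserves edge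
signs. The shift `(u_i, v_j) ↦ u_{i+j}` (addition in `Fin m` wraps modulo `m`) is such a
homomorphism `K_m⁻ □ K_n⁻ → K_m⁻`: adjacent vertices differ in exactly one coordinate, so
cancellation keeps their images distinct, and every edge on both sides is negative.
-/

def boxProdShiftHom {α β : Type*} [Add α] [IsCancelAdd α] (G : SimpleGraph α)
    (H : SimpleGraph β) (f : β ↪ α) : G.boxProd H →g (⊤ : SimpleGraph α) where
  toFun p := p.1 + f p.2
  map_rel' {p q} hpq := by
    rcases SimpleGraph.boxProd_adj.mp hpq with ⟨hG, h2⟩ | ⟨hH, h1⟩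
    · rw [h2]
      exact fun h => hG.ne (add_right_cancel h)
    · rw [h1]
      exact fun h => hH.ne (f.injective (add_left_cancel h))

theorem IsPosSwitching.comp_hom [Fintype V] [Fintype W] {S : SGraph V} {T : SGraph W} {k : ℕ}
    {ζ : V → Fin k → ℤ} (hζ : IsPosSwitching S k ζ) (φ : T.G →g S.G)
    (hsign : ∀ p q, T.G.Adj p q → T.sign p q = S.sign (φ p) (φ q)) :
    IsPosSwitching T k (ζ ∘ φ) := by
  obtain ⟨hval, hnz, hpos⟩ := hζ
  refine ⟨fun p => hval (φ p), fun p q hpq => hnz _ _ (φ.map_rel hpq), fun p q hpq => ?_⟩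
  rw [hsign p q hpq]
  exact hpos _ _ (φ.map_rel hpq)

theorem cartProd_Kneg_sign (m n : ℕ) (p q : Fin m × Fin n) :
    (cartProd (Kneg m) (Kneg n)).sign p q = -1 := by
  simp only [cartProd, Kneg, ite_self]

theorem stmt7 (m n : ℕ) (hmn : n ≤ m) (k : ℕ) (ζ1 : Fin m → Fin k → ℤ)
    (h1 : IsPosSwitching (Kneg m) k ζ1) :
    IsPosSwitching (cartProd (Kneg m) (Kneg n)) k
      (fun p i => ζ1 (p.1 + Fin.castLE hmn p.2) i) :=
  h1.comp_hom (T := cartProd (Kneg m) (Kneg n)) (boxProdShiftHom ⊤ ⊤ (Fin.castLEEmb hmn))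
    fun p q _ => cartProd_Kneg_sign m n p q
end

section
/- If Σ₁ and Σ₂ are signed graphs each having at least one edge, and Σ₂ has at least one negative edge, then the balancing dimension of the HG-lexicographic product Σ₁[Σ₂] is at least 3. -/
open Finset
open scoped Classical

variable {V V1 V2 W : Type*}

/-!
For an edge `ab` of `Σ₁` and a negative edge `cd` of `Σ₂`, the vertices `(a,c)`, `(a,d)`,
`(b,c)` of `Σ₁[Σ₂]` span a negative triangle whatever the sign of `ab`. Ternary vectors of
dimension at most two cannot realise a negative triangle: padding with zeros reduces to
dimension two, where it is a finite check. Since `bdim` is an infimum, one also needs some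
dimension to work at all; one coordinate per oriented edge `(a, b)`, carrying `1` at `a` and
`σ(ab)` at `b`, gives every edge `uv` the inner product `2 σ(uv)`.
-/

namespace HasPosSwitching

variable [Fintype V] {S : SGraph V}

theorem of_index {ι : Type*} [Fintype ι] (ζ : V → ι → ℤ)
    (hval : ∀ v i, ζ v i = -1 ∨ ζ v i = 0 ∨ ζ v i = 1)
    (hsign : ∀ u v, S.G.Adj u v → S.sign u v * Int.sign (∑ i, ζ u i * ζ v i) = 1) :
    HasPosSwitching S (Fintype.card ι) := by
  let e := Fintype.equivFin ι
  have hsum : ∀ u v, ∑ j, ζ u (e.symm j) * ζ v (e.symm j) = ∑ i, ζ u i * ζ v i :=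
    fun u v => e.symm.sum_comp fun i => ζ u i * ζ v i
  refine ⟨fun v j => ζ v (e.symm j), fun v j => hval v _, fun u v huv h => ?_,
    fun u v huv => by rw [hsum]; exact hsign u v huv⟩
  rw [hsum] at h
  simpa [h] using hsign u v huv

theorem mono {k m : ℕ} (h : HasPosSwitching S k) (hkm : k ≤ m) : HasPosSwitching S m := by
  obtain ⟨ζ, hval, -, hsign⟩ := h
  have hcard : Fintype.card (Fin k ⊕ Fin (m - k)) = m := by simp; omega
  rw [← hcard]
  refine of_index (fun v => Sum.elim (ζ v) 0) (fun v i => ?_) (fun u v huv => ?_)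
  · cases i <;> simp [hval]
  · simpa [Fintype.sum_sum_type] using hsign u v huv

end HasPosSwitching

theorem IsPosSwitching.sign_inner_eq [Fintype V] {S : SGraph V} {k : ℕ} {ζ : V → Fin k → ℤ}
    (h : IsPosSwitching S k ζ) {u v : V} (huv : S.G.Adj u v) :
    Int.sign (∑ i, ζ u i * ζ v i) = S.sign u v := by
  have := h.2.2 u v huv
  rcases S.sign_mem u v huv with hs | hs <;> rw [hs] at this ⊢ <;> omega

namespace SGraph

noncomputable def edgeVector (S : SGraph V) (u : V) (p : V × V) : ℤ :=
  if S.G.Adj p.1 p.2 then (if u = p.1 then 1 else if u = p.2 then S.sign p.1 p.2 else 0) else 0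

theorem edgeVector_mem (S : SGraph V) (u : V) (p : V × V) :
    S.edgeVector u p = -1 ∨ S.edgeVector u p = 0 ∨ S.edgeVector u p = 1 := by
  unfold edgeVector
  split_ifs with hp
  · exact Or.inr (Or.inr rfl)
  · rcases S.sign_mem _ _ hp with h | h <;> simp [h]
  all_goals exact Or.inr (Or.inl rfl)

theorem sum_edgeVector_mul [Fintype V] (S : SGraph V) {u v : V} (huv : S.G.Adj u v) :
    ∑ p, S.edgeVector u p * S.edgeVector v p = 2 * S.sign u v := by
  have hne : (u, v) ≠ (v, u) := fun h => huv.ne (congrArg Prod.fst h)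
  rw [Fintype.sum_eq_add (u, v) (v, u) hne fun p hp => ?_]
  · simp [edgeVector, huv, huv.symm, huv.ne, huv.ne.symm, S.sign_symm v u]
    ring
  · obtain ⟨a, b⟩ := p
    simp only [edgeVector]
    split_ifs <;> grind

theorem hasPosSwitching_card_prod [Fintype V] (S : SGraph V) :
    HasPosSwitching S (Fintype.card (V × V)) :=
  HasPosSwitching.of_index S.edgeVector S.edgeVector_mem fun u v huv => by
    rw [S.sum_edgeVector_mul huv]
    rcases S.sign_mem u v huv with h | h <;> rw [h] <;> rfl

end SGraph

theorem sign_inner_mul_sign_inner_mul_sign_inner_ne_neg_one (x y z : Fin 2 → ℤ)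
    (hx : ∀ i, x i = -1 ∨ x i = 0 ∨ x i = 1) (hy : ∀ i, y i = -1 ∨ y i = 0 ∨ y i = 1)
    (hz : ∀ i, z i = -1 ∨ z i = 0 ∨ z i = 1) :
    Int.sign (∑ i, x i * y i) * Int.sign (∑ i, y i * z i) * Int.sign (∑ i, x i * z i) ≠ -1 := by
  simp only [Fin.sum_univ_two]
  rcases hx 0 with h₁ | h₁ | h₁ <;> rcases hx 1 with h₂ | h₂ | h₂ <;>
    rcases hy 0 with h₃ | h₃ | h₃ <;> rcases hy 1 with h₄ | h₄ | h₄ <;>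
    rcases hz 0 with h₅ | h₅ | h₅ <;> rcases hz 1 with h₆ | h₆ | h₆ <;>
    rw [h₁, h₂, h₃, h₄, h₅, h₆] <;> decide

theorem not_hasPosSwitching_two_of_neg_triangle [Fintype V] (S : SGraph V) {x y z : V}
    (hxy : S.G.Adj x y) (hyz : S.G.Adj y z) (hxz : S.G.Adj x z)
    (hneg : S.sign x y * S.sign y z * S.sign x z = -1) : ¬ HasPosSwitching S 2 := by
  rintro ⟨ζ, hζ⟩
  refine sign_inner_mul_sign_inner_mul_sign_inner_ne_neg_one (ζ x) (ζ y) (ζ z)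
    (hζ.1 x) (hζ.1 y) (hζ.1 z) ?_
  rw [hζ.sign_inner_eq hxy, hζ.sign_inner_eq hyz, hζ.sign_inner_eq hxz, hneg]

theorem three_le_bdim_of_neg_triangle [Fintype V] (S : SGraph V) {x y z : V}
    (hxy : S.G.Adj x y) (hyz : S.G.Adj y z) (hxz : S.G.Adj x z)
    (hneg : S.sign x y * S.sign y z * S.sign x z = -1) : 3 ≤ bdim S := by
  have hne : {k | 1 ≤ k ∧ HasPosSwitching S k}.Nonempty :=
    ⟨_, le_add_self, S.hasPosSwitching_card_prod.mono (Nat.le_succ _)⟩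
  obtain ⟨-, hbdim⟩ := Nat.sInf_mem hne
  by_contra! hlt
  exact not_hasPosSwitching_two_of_neg_triangle S hxy hyz hxz hneg
    (hbdim.mono (Nat.le_of_lt_succ hlt))

theorem lexHG_sign_neg_triangle (S1 : SGraph V1) (S2 : SGraph V2) {a b : V1} {c d : V2}
    (hab : S1.G.Adj a b) (hcd : S2.sign c d = -1) :
    (lexHG S1 S2).sign (a, c) (a, d) * (lexHG S1 S2).sign (a, d) (b, c) *
      (lexHG S1 S2).sign (a, c) (b, c) = -1 := by
  simp only [lexHG, if_pos, if_neg hab.ne, hcd]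
  rcases S1.sign_mem a b hab with h | h <;> rw [h] <;> rfl

theorem stmt8 [Fintype V1] [Fintype V2] (S1 : SGraph V1) (S2 : SGraph V2)
    (h1 : ∃ a b, S1.G.Adj a b)
    (h2 : ∃ c d, S2.G.Adj c d ∧ S2.sign c d = -1) :
    3 ≤ bdim (lexHG S1 S2) := by
  obtain ⟨a, b, hab⟩ := h1
  obtain ⟨c, d, hcd, hneg⟩ := h2
  exact three_le_bdim_of_neg_triangle (lexHG S1 S2) (x := (a, c)) (y := (a, d)) (z := (b, c))
    (Or.inr ⟨rfl, hcd⟩) (Or.inl hab) (Or.inl hab) (lexHG_sign_neg_triangle S1 S2 hab hneg)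
end

section
/- If Σ₁ is antibalanced and Σ₂ is all-negative, then the HG-lexicographic product Σ₁[Σ₂] is antibalanced. -/
open Finset
open scoped Classical

variable {V V1 V2 W : Type*}

namespace SGraph

variable [Fintype V] (S : SGraph V)

theorem balanced_iff : S.Balanced ↔ ∃ η : V → ℤ, (∀ v, η v = 1 ∨ η v = -1) ∧
    ∀ u v, S.G.Adj u v → S.sign u v = η u * η v := by
  constructor
  · rintro ⟨ζ, hval, hnz, hsgn⟩
    simp only [Fin.sum_univ_one] at hnz hsgn
    -- vertices outside every edge may have `ζ v 0 = 0`; they can be given either sign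
    refine ⟨fun v => if ζ v 0 = 0 then 1 else ζ v 0, fun v => ?_, fun u v huv => ?_⟩
    · rcases hval v 0 with h | h | h <;> simp [h]
    · obtain ⟨hu, hv⟩ := mul_ne_zero_iff.mp (hnz u v huv)
      simp only [if_neg hu, if_neg hv]
      have hunit : ζ u 0 * ζ v 0 = 1 ∨ ζ u 0 * ζ v 0 = -1 := by
        rcases hval u 0 with h | h | h <;> rcases hval v 0 with h' | h' | h' <;> simp_all
      have hsign := hsgn u v huv
      rcases hunit with h | h <;> rw [h] at hsign ⊢ <;>
        simp only [Int.sign_one, Int.sign_neg] at hsign <;> omega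
  · rintro ⟨η, hη, hsign⟩
    refine ⟨fun v _ => η v, fun v _ => ?_, fun u v huv => ?_, fun u v huv => ?_⟩ <;>
      simp only [Fin.sum_univ_one]
    · rcases hη v with h | h <;> simp [h]
    · rcases hη u with h | h <;> rcases hη v with h' | h' <;> simp [h, h']
    · rw [hsign u v huv]
      rcases hη u with h | h <;> rcases hη v with h' | h' <;> simp [h, h']

theorem antibalanced_iff :
    S.Antibalanced ↔ ∃ η : V → ℤ, (∀ v, η v = 1 ∨ η v = -1) ∧
    ∀ u v, S.G.Adj u v → S.sign u v = -(η u * η v) := by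
  refine S.neg.balanced_iff.trans (exists_congr fun η => and_congr_right fun _ => ?_)
  exact forall₂_congr fun u v => imp_congr_right fun _ => neg_eq_iff_eq_neg

end SGraph

theorem lexHG_sign_of_fst_eq (S1 : SGraph V1) (S2 : SGraph V2) {p q : V1 × V2}
    (h : p.1 = q.1) : (lexHG S1 S2).sign p q = S2.sign p.2 q.2 :=
  if_pos h

theorem lexHG_sign_of_fst_ne (S1 : SGraph V1) (S2 : SGraph V2) {p q : V1 × V2}
    (h : p.1 ≠ q.1) : (lexHG S1 S2).sign p q = S1.sign p.1 q.1 :=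
  if_neg h

theorem stmt11 [Fintype V1] [Fintype V2] (S1 : SGraph V1) (S2 : SGraph V2)
    (h1 : S1.Antibalanced) (h2 : ∀ u v, S2.G.Adj u v → S2.sign u v = -1) :
    (lexHG S1 S2).Antibalanced := by
  obtain ⟨η, hη, hsign⟩ := S1.antibalanced_iff.mp h1
  -- switch every fibre `{u} × V2` by `η u`; edges inside a fibre are then left unchanged
  refine (lexHG S1 S2).antibalanced_iff.mpr ⟨fun p => η p.1, fun p => hη p.1, ?_⟩
  rintro p q (hadj | ⟨hfst, hadj⟩)
  · rw [lexHG_sign_of_fst_ne S1 S2 hadj.ne]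
    exact hsign _ _ hadj
  · rw [lexHG_sign_of_fst_eq S1 S2 hfst, h2 _ _ hadj]
    dsimp only
    rcases hη q.1 with h | h <;> simp [hfst, h]
end

section
/- If signed graphs Σ₁ and Σ₁' are switching equivalent, then the BCD-lexicographic products Σ₁*Σ₂ and Σ₁'*Σ₂ are switching equivalent, for any signed graph Σ₂. -/
open Finset
open scoped Classical

variable {V V1 V2 W : Type*}

theorem mul_mul_self_of_eq_one_or_eq_neg_one {a : ℤ} (ha : a = 1 ∨ a = -1) (x : ℤ) :
    a * x * a = x := by
  rcases ha with rfl | rfl <;> ring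

theorem lexBCD_G (S1 : SGraph V1) (S2 : SGraph V2) :
    (lexBCD S1 S2).G = lexProdGraph S1.G S2.G :=
  rfl

section lexBCDSign

variable {S1 : SGraph V1} {S2 : SGraph V2} {p q : V1 × V2}

theorem lexBCD_sign_of_adj_fst (h : S1.G.Adj p.1 q.1) :
    (lexBCD S1 S2).sign p q =
      if S2.G.Adj p.2 q.2 then S1.sign p.1 q.1 * S2.sign p.2 q.2 else S1.sign p.1 q.1 := by
  simp only [lexBCD, if_pos h]

theorem lexBCD_sign_of_fst_eq (h1 : p.1 = q.1) (h2 : S2.G.Adj p.2 q.2) :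
    (lexBCD S1 S2).sign p q = S2.sign p.2 q.2 := by
  simp only [lexBCD, if_pos h2, h1, S1.G.irrefl, if_false]

end lexBCDSign

theorem stmt14 (S1 S1' : SGraph V1) (S2 : SGraph V2)
    (h : SwitchEquiv S1 S1') : SwitchEquiv (lexBCD S1 S2) (lexBCD S1' S2) := by
  obtain ⟨hG, η, hη, hsign⟩ := h
  refine ⟨by rw [lexBCD_G, lexBCD_G, hG], fun p => η p.1, fun p => hη p.1, ?_⟩
  rintro p q (hadj | ⟨h1, h2⟩)
  · have hadj' : S1'.G.Adj p.1 q.1 := hG ▸ hadj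
    rw [lexBCD_sign_of_adj_fst hadj, lexBCD_sign_of_adj_fst hadj', hsign _ _ hadj]
    split_ifs <;> ring
  · rw [lexBCD_sign_of_fst_eq h1 h2, lexBCD_sign_of_fst_eq h1 h2]
    dsimp only
    rw [h1, mul_mul_self_of_eq_one_or_eq_neg_one (hη q.1)]
end
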